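/- Define g_{ω₀,ν}(ω) = ω (1 − h(√(νω₀/ω)))^{−1} for ω > 0, where h(x) = x e^{x²/2} ∫_x^∞ e^{−z²/2} dz (so that h(x) < 1). Then for any ν, ω₀ > 0, g_{ω₀,ν} is nondecreasing in ω and g_{ω₀,ν}(ω)/ω is nonincreasing in ω (i.e., g_{ω₀,ν} satisfies GRM). -/

import Mathlib

open Real MeasureTheory Set

noncomputable def h (x : ℝ) : ℝ :=
  x * Real.exp (x ^ 2 / 2) * ∫ z in Set.Ioi x, Real.exp (-z ^ 2 / 2)

lemma h_repr {x : ℝ} (hx : 0 < x) :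
    h x = ∫ v in Ioi (0:ℝ), Real.exp (-v - v^2/(2*x^2)) := by
  have hx0 : x ≠ 0 := hx.ne'
  have himg : Ioi x = (fun v => x + v / x) '' Ioi 0 := by
    ext z
    constructor
    · intro hz
      exact ⟨x * (z - x), mem_Ioi.mpr (by nlinarith [mem_Ioi.mp hz]), by field_simp; ring⟩
    · rintro ⟨v, hv, rfl⟩
      have : 0 < v / x := div_pos hv hx
      simp [mem_Ioi]; linarith [this]
  have hderiv : ∀ v ∈ Ioi (0:ℝ), HasDerivWithinAt (fun v => x + v / x) x⁻¹ (Ioi 0) v := by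
    intro v _
    simpa using (((hasDerivAt_id v).div_const x).const_add x).hasDerivWithinAt
  have hinj : InjOn (fun v => x + v / x) (Ioi 0) := by
    intro a _ b _ hab
    field_simp at hab
    linarith
  have key := integral_image_eq_integral_abs_deriv_smul measurableSet_Ioi hderiv hinj
    (fun z => Real.exp (-z^2/2))
  unfold h
  rw [← himg] at key
  rw [key]
  rw [show (∫ v in Ioi (0:ℝ), |x⁻¹| • Real.exp (-(x + v/x)^2/2)) =
      ∫ v in Ioi (0:ℝ), x⁻¹ * Real.exp (-x^2/2) * Real.exp (-v - v^2/(2*x^2)) from ?_]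
  · rw [MeasureTheory.integral_const_mul]
    rw [← mul_assoc]
    rw [show x * Real.exp (x^2/2) * (x⁻¹ * Real.exp (-x^2/2)) = 1 by
      rw [mul_mul_mul_comm, ← Real.exp_add, mul_inv_cancel₀ hx0, one_mul, show x^2/2 + -x^2/2 = (0:ℝ) by ring, Real.exp_zero]]
    rw [one_mul]
  · congr 1
    ext v
    rw [abs_of_pos (inv_pos.mpr hx), smul_eq_mul, mul_assoc, ← Real.exp_add]
    congr 2
    field_simp
    ring

lemma integrable_exp_neg : IntegrableOn (fun v : ℝ => Real.exp (-v)) (Ioi 0) := by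
  simpa using exp_neg_integrableOn_Ioi (0:ℝ) one_pos

lemma integrable_aux {x : ℝ} (hx : 0 < x) :
    IntegrableOn (fun v => Real.exp (-v - v^2/(2*x^2))) (Ioi 0) := by
  apply MeasureTheory.Integrable.mono integrable_exp_neg
  · exact (Real.continuous_exp.comp (by continuity)).aestronglyMeasurable
  · refine Filter.Eventually.of_forall fun v => ?_
    rw [Real.norm_eq_abs, Real.norm_eq_abs, abs_of_pos (Real.exp_pos _),
      abs_of_pos (Real.exp_pos _)]
    apply Real.exp_le_exp.mpr
    have : 0 ≤ v^2/(2*x^2) := by positivity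
    linarith

lemma h_nonneg {x : ℝ} (hx : 0 < x) : 0 ≤ h x := by
  rw [h_repr hx]
  exact setIntegral_nonneg measurableSet_Ioi fun v _ => (Real.exp_pos _).le

lemma h_lt_one {x : ℝ} (hx : 0 < x) : h x < 1 := by
  have key : 0 < ∫ v in Ioi (0:ℝ), (Real.exp (-v) - Real.exp (-v - v^2/(2*x^2))) := by
    rw [setIntegral_pos_iff_support_of_nonneg_ae]
    · have hsub : Ioi (0:ℝ) ⊆ Function.support
          (fun v => Real.exp (-v) - Real.exp (-v - v^2/(2*x^2))) := by
        intro v hv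
        have hv' : 0 < v := hv
        have : Real.exp (-v - v^2/(2*x^2)) < Real.exp (-v) := by
          apply Real.exp_lt_exp.mpr
          have : 0 < v^2/(2*x^2) := by positivity
          linarith
        simp only [Function.mem_support]
        intro hcon
        rw [sub_eq_zero] at hcon
        linarith [this]
      calc (0:ENNReal) < volume (Ioi (0:ℝ)) := by simp
        _ ≤ volume (Function.support (fun v => Real.exp (-v) - Real.exp (-v - v^2/(2*x^2))) ∩ Ioi 0) := by
            apply measure_mono; intro v hv; exact ⟨hsub hv, hv⟩
    · refine Filter.Eventually.of_forall fun v => ?_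
      have : 0 ≤ v^2/(2*x^2) := by positivity
      have := Real.exp_le_exp.mpr (show -v - v^2/(2*x^2) ≤ -v by linarith)
      simpa using this
    · exact integrable_exp_neg.sub (integrable_aux hx)
  rw [MeasureTheory.integral_sub integrable_exp_neg (integrable_aux hx),
      integral_exp_neg_Ioi_zero] at key
  rw [h_repr hx]
  linarith

lemma h_mono {a b : ℝ} (ha : 0 < a) (hab : a ≤ b) : h a ≤ h b := by
  have hb : 0 < b := lt_of_lt_of_le ha hab
  rw [h_repr ha, h_repr hb]
  apply integral_mono_of_nonneg
  · exact Filter.Eventually.of_forall fun v => (Real.exp_pos _).le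
  · exact integrable_aux hb
  · refine Filter.Eventually.of_forall fun v => ?_
    apply Real.exp_le_exp.mpr
    have h2 : a^2 ≤ b^2 := by nlinarith
    have : v^2/(2*b^2) ≤ v^2/(2*a^2) := by
      apply div_le_div_of_nonneg_left (by positivity) (by positivity) (by nlinarith)
    linarith

lemma mono_y {c : ℝ} (hc : 0 ≤ c) :
    MonotoneOn (fun y => y * (1 - Real.exp (-(c/y)))) (Ioi (0:ℝ)) := by
  have hderiv : ∀ y ∈ interior (Ioi (0:ℝ)), HasDerivAt
      (fun y => y * (1 - Real.exp (-(c/y))))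
      (1 * (1 - Real.exp (-(c/y))) + y * (0 - Real.exp (-(c/y)) * (c * (y^2)⁻¹))) y := by
    intro y hy
    rw [interior_Ioi] at hy
    have hy0 : y ≠ 0 := (mem_Ioi.mp hy).ne'
    have h1 : HasDerivAt (fun y : ℝ => -(c/y)) (c * (y^2)⁻¹) y := by
      have := ((hasDerivAt_inv hy0).const_mul c).neg
      rw [show (fun y : ℝ => -(c/y)) = -fun y => c * y⁻¹ from by ext y; simp [div_eq_mul_inv],
        show c * (y^2)⁻¹ = -(c * -(y ^ 2)⁻¹) by ring]
      exact this
    have h2 : HasDerivAt (fun y : ℝ => Real.exp (-(c/y)))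
        (Real.exp (-(c/y)) * (c * (y^2)⁻¹)) y := by
      simpa [mul_comm] using h1.exp
    exact (hasDerivAt_id y).mul ((hasDerivAt_const y 1).sub h2)
  apply monotoneOn_of_deriv_nonneg (convex_Ioi 0)
  · apply ContinuousOn.mul continuousOn_id
    apply ContinuousOn.sub continuousOn_const
    apply Real.continuous_exp.comp_continuousOn
    exact (ContinuousOn.div continuousOn_const continuousOn_id
      (fun y hy => ne_of_gt hy)).neg
  · intro y hy
    exact (hderiv y hy).differentiableAt.differentiableWithinAt
  · intro y hy
    rw [(hderiv y hy).deriv]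
    rw [interior_Ioi] at hy
    have hy0 : 0 < y := hy
    set t := c / y with ht
    have ht0 : 0 ≤ t := div_nonneg hc hy0.le
    have key : (1 + t) * Real.exp (-t) ≤ 1 := by
      have h1 := Real.add_one_le_exp t
      have h2 : Real.exp t * Real.exp (-t) = 1 := by
        rw [← Real.exp_add]; simp
      nlinarith [Real.exp_pos (-t), Real.exp_pos t]
    have hyt : y * (Real.exp (-t) * (c * (y^2)⁻¹)) = t * Real.exp (-t) := by
      rw [ht]; field_simp
    nlinarith [key, hyt]

lemma ptwise {s t v : ℝ} (hs : 0 < s) (hst : s ≤ t) :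
    s^2 * (Real.exp (-v) - Real.exp (-v - v^2/(2*s^2))) ≤
    t^2 * (Real.exp (-v) - Real.exp (-v - v^2/(2*t^2))) := by
  have ht : 0 < t := lt_of_lt_of_le hs hst
  have key := mono_y (show (0:ℝ) ≤ v^2/2 by positivity)
    (mem_Ioi.mpr (by positivity : (0:ℝ) < s^2))
    (mem_Ioi.mpr (by positivity : (0:ℝ) < t^2))
    (by nlinarith : s^2 ≤ t^2)
  have rew : ∀ x : ℝ, 0 < x → x^2 * (Real.exp (-v) - Real.exp (-v - v^2/(2*x^2))) =
      Real.exp (-v) * (x^2 * (1 - Real.exp (-(v^2/2/x^2)))) := by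
    intro x hx
    have : Real.exp (-v - v^2/(2*x^2)) = Real.exp (-v) * Real.exp (-(v^2/2/x^2)) := by
      rw [← Real.exp_add]
      congr 1
      field_simp
      ring
    rw [this]; ring
  rw [rew s hs, rew t ht]
  exact mul_le_mul_of_nonneg_left key (Real.exp_pos _).le

lemma K_repr {x : ℝ} (hx : 0 < x) : x^2 * (1 - h x) =
    ∫ v in Ioi (0:ℝ), x^2 * (Real.exp (-v) - Real.exp (-v - v^2/(2*x^2))) := by
  rw [h_repr hx, MeasureTheory.integral_const_mul,
    MeasureTheory.integral_sub integrable_exp_neg (integrable_aux hx),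
    integral_exp_neg_Ioi_zero]

lemma K_mono {s t : ℝ} (hs : 0 < s) (hst : s ≤ t) :
    s^2 * (1 - h s) ≤ t^2 * (1 - h t) := by
  have ht : 0 < t := lt_of_lt_of_le hs hst
  rw [K_repr hs, K_repr ht]
  apply integral_mono_of_nonneg
  · refine Filter.Eventually.of_forall fun v => ?_
    have : Real.exp (-v - v^2/(2*s^2)) ≤ Real.exp (-v) := by
      apply Real.exp_le_exp.mpr
      have : 0 ≤ v^2/(2*s^2) := by positivity
      linarith
    have : 0 ≤ Real.exp (-v) - Real.exp (-v - v^2/(2*s^2)) := by linarith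
    positivity
  · exact (integrable_exp_neg.sub (integrable_aux ht)).const_mul _
  · exact Filter.Eventually.of_forall fun v => ptwise hs hst

theorem stmt_17 (ν ω₀ : ℝ) (hν : 0 < ν) (hω₀ : 0 < ω₀)
    (g : ℝ → ℝ)
    (hg : ∀ ω, 0 < ω → g ω = ω * (1 - h (Real.sqrt (ν * ω₀ / ω)))⁻¹) :
    (∀ a b, 0 < a → a ≤ b → g a ≤ g b) ∧
    (∀ a b, 0 < a → a ≤ b → g b / b ≤ g a / a) := by
  have hc : 0 < ν * ω₀ := mul_pos hν hω₀
  have hx : ∀ ω : ℝ, 0 < ω → 0 < Real.sqrt (ν * ω₀ / ω) :=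
    fun ω hω => Real.sqrt_pos.mpr (div_pos hc hω)
  have hxsq : ∀ ω : ℝ, 0 < ω → (Real.sqrt (ν * ω₀ / ω))^2 = ν * ω₀ / ω :=
    fun ω hω => Real.sq_sqrt (div_pos hc hω).le
  have hxle : ∀ a b : ℝ, 0 < a → a ≤ b →
      Real.sqrt (ν * ω₀ / b) ≤ Real.sqrt (ν * ω₀ / a) := by
    intro a b ha hab
    exact Real.sqrt_le_sqrt (div_le_div_of_nonneg_left hc.le ha hab)
  constructor
  · intro a b ha hab
    have hb : 0 < b := lt_of_lt_of_le ha hab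
    set xa := Real.sqrt (ν * ω₀ / a)
    set xb := Real.sqrt (ν * ω₀ / b)
    have hxa := hx a ha
    have hxb := hx b hb
    have hrw : ∀ ω : ℝ, 0 < ω →
        g ω = ν * ω₀ / ((Real.sqrt (ν * ω₀ / ω))^2 * (1 - h (Real.sqrt (ν * ω₀ / ω)))) := by
      intro ω hω
      rw [hg ω hω, hxsq ω hω]
      have h1 : h (Real.sqrt (ν * ω₀ / ω)) < 1 := h_lt_one (hx ω hω)
      set H := h (Real.sqrt (ν * ω₀ / ω)) with hH
      have h2 : (1:ℝ) - H ≠ 0 := by linarith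
      field_simp
    rw [hrw a ha, hrw b hb]
    have hK := K_mono hxb (hxle a b ha hab)
    have hKb : 0 < xb^2 * (1 - h xb) := by
      have := h_lt_one hxb
      have h2 : 0 < 1 - h xb := by linarith
      positivity
    exact div_le_div_of_nonneg_left hc.le hKb hK
  · intro a b ha hab
    have hb : 0 < b := lt_of_lt_of_le ha hab
    set xa := Real.sqrt (ν * ω₀ / a)
    set xb := Real.sqrt (ν * ω₀ / b)
    have hxa := hx a ha
    have hxb := hx b hb
    rw [hg a ha, hg b hb, mul_div_cancel_left₀ _ ha.ne', mul_div_cancel_left₀ _ hb.ne']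
    have hmono := h_mono hxb (hxle a b ha hab)
    have h1 := h_lt_one hxa
    exact inv_anti₀ (by linarith) (by linarith)
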